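/- arXiv:1701.07117 — 2 statements merged into one kernel-verified Lean document; each statement's English description precedes it below -/
import Mathlib

section
/- Let A be a ring, X and Y right A-modules, and {Y_i}_{i∈I} a family of submodules of Y such that X is injective with respect to Y_i for each i ∈ I. Then X is injective with respect to the submodule Σ_{i∈I} Y_i of Y. Moreover, if there exists a monomorphism A_A → Σ_{i∈I} Y_i, then the module X is injective. -/
open MulOpposite

open MulOpposite

/-- The right annihilator `r(x) = {a : A | x·a = 0}` of an element `x` of a right `A`-module `X`,
as a right ideal of `A`. -/
def rightAnn (A : Type*) [Ring A] {X : Type*} [AddCommGroup X] [Module Aᵐᵒᵖ X]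
    (x : X) : Submodule Aᵐᵒᵖ A where
  carrier := {a : A | op a • x = 0}
  add_mem' := by
    intro a b ha hb
    simp only [Set.mem_setOf_eq] at *
    rw [op_add, add_smul, ha, hb, add_zero]
  zero_mem' := by simp
  smul_mem' := by
    intro c a ha
    simp only [Set.mem_setOf_eq] at *
    have h1 : c • a = a * c.unop := rfl
    rw [h1]
    have h2 : op (a * c.unop) = c * op a := by
      simp [MulOpposite.op_mul]
    rw [h2, mul_smul, ha, smul_zero]

/-- A right ideal `B` of `A` is essential if it has non-zero intersection with every
non-zero right ideal of `A`. -/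
def IsEssentialRightIdeal (A : Type*) [Ring A] (B : Submodule Aᵐᵒᵖ A) : Prop :=
  ∀ C : Submodule Aᵐᵒᵖ A, C ≠ ⊥ → B ⊓ C ≠ ⊥

/-- A right `A`-module `X` is non-singular if its singular submodule is zero, i.e. the only
element of `X` whose right annihilator is an essential right ideal of `A` is `0`. -/
def IsNonsingularMod (A : Type*) [Ring A] (X : Type*) [AddCommGroup X] [Module Aᵐᵒᵖ X] : Prop :=
  ∀ x : X, IsEssentialRightIdeal A (rightAnn A x) → x = 0

/-- The Goldie radical (second singular submodule) `G(X)` of a right `A`-module `X`: the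
intersection of all submodules `Y ⊆ X` such that `X/Y` is non-singular. -/
def goldieRadical (A : Type*) [Ring A] (X : Type*) [AddCommGroup X] [Module Aᵐᵒᵖ X] :
    Submodule Aᵐᵒᵖ X :=
  sInf {Y : Submodule Aᵐᵒᵖ X | IsNonsingularMod A (X ⧸ Y)}

/-- A module `X` is injective with respect to a module `Y` (`Y`-injective) if every homomorphism
from a submodule of `Y` to `X` extends to a homomorphism `Y → X`. -/
def IsInjectiveWrt (R : Type*) [Ring R] (X : Type*) [AddCommGroup X] [Module R X]
    (Y : Type*) [AddCommGroup Y] [Module R Y] : Prop :=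
  ∀ (Y₁ : Submodule R Y) (f : Y₁ →ₗ[R] X), ∃ g : Y →ₗ[R] X, ∀ y : Y₁, g y = f y

/-- A ring `A` is right strongly semiprime if every two-sided ideal of `A` which is essential
as a right ideal contains a finite subset with zero right annihilator. -/
def IsRightStronglySemiprime (A : Type*) [Ring A] : Prop :=
  ∀ T : TwoSidedIdeal A,
    (∀ C : Submodule Aᵐᵒᵖ A, C ≠ ⊥ → ∃ x ∈ C, x ≠ 0 ∧ x ∈ T) →
    ∃ K : Finset A, (K : Set A) ⊆ (T : Set A) ∧ ∀ a : A, (∀ k ∈ K, k * a = 0) → a = 0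

/-! Zorn's lemma gives a maximal partial extension `g` of a map `Y₁ → X`. Since `X` is
`Yᵢ`-injective, the restriction of `g` to `dom g ∩ Yᵢ` extends to `Yᵢ` and glues with `g` to a map
on `dom g + Yᵢ`, so maximality forces `Yᵢ ⊆ dom g` for every `i`. If `A_A` embeds into `Σᵢ Yᵢ`,
then `X` is `A_A`-injective, which is Baer's criterion. -/

namespace IsInjectiveWrt

variable {R : Type*} [Ring R] {X : Type*} [AddCommGroup X] [Module R X]
  {M : Type*} [AddCommGroup M] [Module R M]

theorem of_injective {N : Type*} [AddCommGroup N] [Module R N] (h : IsInjectiveWrt R X M)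
    (e : N →ₗ[R] M) (he : Function.Injective e) : IsInjectiveWrt R X N := by
  intro N₁ f
  let e₁ := Submodule.equivMapOfInjective e he N₁
  obtain ⟨g, hg⟩ := h (N₁.map e) (f ∘ₗ e₁.symm.toLinearMap)
  refine ⟨g ∘ₗ e, fun y => ?_⟩
  simpa [e₁] using hg (e₁ y)

theorem exists_le_with_le_domain {N : Submodule R M} (hN : IsInjectiveWrt R X N)
    (g : M →ₗ.[R] X) : ∃ g' : M →ₗ.[R] X, g ≤ g' ∧ N ≤ g'.domain := by
  let K : Submodule R N := g.domain.comap N.subtype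
  let φ : K →ₗ[R] X :=
    g.toFun ∘ₗ LinearMap.codRestrict g.domain (N.subtype ∘ₗ K.subtype) fun x => x.2
  obtain ⟨ψ, hψ⟩ := hN K φ
  have agree : ∀ (x : g.domain) (y : N), (x : M) = y → g x = ψ y := by
    intro x y hxy
    have hyK : y ∈ K := show (y : M) ∈ g.domain from hxy ▸ x.2
    rw [hψ ⟨y, hyK⟩]
    exact congrArg g (Subtype.ext hxy)
  exact ⟨g.sup ⟨N, ψ⟩ agree, g.left_le_sup _ agree, le_sup_right⟩

theorem of_iSup_eq_top {I : Type*} {N : I → Submodule R M} (htop : ⨆ i, N i = ⊤)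
    (hN : ∀ i, IsInjectiveWrt R X (N i)) : IsInjectiveWrt R X M := by
  intro M₁ f
  obtain ⟨g, hfg, hmax⟩ := zorn_le_nonempty₀ {g : M →ₗ.[R] X | ⟨M₁, f⟩ ≤ g}
    (fun c hcS hchain _ hyc =>
      ⟨LinearPMap.sSup c hchain.directedOn,
        (hcS hyc).trans (LinearPMap.le_sSup _ hyc), fun _ hz => LinearPMap.le_sSup _ hz⟩)
    ⟨M₁, f⟩ (Set.mem_ofPred.2 le_rfl)
  have hdomain : g.domain = ⊤ := by
    refine top_unique (htop ▸ iSup_le fun i => ?_)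
    obtain ⟨g', hgg', hNg'⟩ := (hN i).exists_le_with_le_domain g
    exact hNg'.trans (hmax.2 (hmax.1.trans hgg') hgg').1
  refine ⟨g.toFun ∘ₗ (LinearEquiv.ofTop _ hdomain).symm.toLinearMap, fun y => ?_⟩
  exact (hfg.2 rfl).symm

theorem iSup {Y : Type*} [AddCommGroup Y] [Module R Y] {I : Type*} {N : I → Submodule R Y}
    (hN : ∀ i, IsInjectiveWrt R X (N i)) : IsInjectiveWrt R X ↥(⨆ i, N i) := by
  have htop : ⨆ i, (N i).comap (⨆ i, N i).subtype = ⊤ := by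
    apply Submodule.map_injective_of_injective (⨆ i, N i).injective_subtype
    simp [Submodule.map_iSup, Submodule.map_comap_eq, le_iSup N]
  refine of_iSup_eq_top htop fun i => ?_
  let e := Submodule.comapSubtypeEquivOfLe (le_iSup N i)
  exact (hN i).of_injective e.toLinearMap e.injective

theorem baer (h : IsInjectiveWrt R X R) : Module.Baer R X := fun J g =>
  let ⟨g', hg'⟩ := h J g
  ⟨g', fun x hx => hg' ⟨x, hx⟩⟩

end IsInjectiveWrt

/-- If `X` is injective with respect to each submodule `Y i` of `Y`, then `X` is
injective with respect to the submodule `Σᵢ Yᵢ` of `Y`; moreover, if `A_A` embeds into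
`Σᵢ Yᵢ`, then `X` is injective. -/
theorem stmt3 (A : Type u) [Ring A] (X : Type v) [AddCommGroup X] [Module Aᵐᵒᵖ X]
    (Y : Type w) [AddCommGroup Y] [Module Aᵐᵒᵖ Y]
    {I : Type z} (Yi : I → Submodule Aᵐᵒᵖ Y)
    (hX : ∀ i, IsInjectiveWrt Aᵐᵒᵖ X ↥(Yi i)) :
    IsInjectiveWrt Aᵐᵒᵖ X ↥(⨆ i, Yi i) ∧
      ((∃ g : A →ₗ[Aᵐᵒᵖ] ↥(⨆ i, Yi i), Function.Injective g) →
        Module.Injective Aᵐᵒᵖ X) := by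
  have hsup : IsInjectiveWrt Aᵐᵒᵖ X ↥(⨆ i, Yi i) := IsInjectiveWrt.iSup hX
  refine ⟨hsup, fun ⟨g, hg⟩ => ?_⟩
  have hA : IsInjectiveWrt Aᵐᵒᵖ X A := hsup.of_injective g hg
  let e : Aᵐᵒᵖ ≃ₗ[Aᵐᵒᵖ] A := (MulOpposite.opLinearEquiv Aᵐᵒᵖ).symm
  exact (hA.of_injective e.toLinearMap e.injective).baer.injective
end

section
/- Let A be a ring, X a non-singular non-zero right A-module, and {C_i : i ∈ I} the set of all non-zero right ideals of A such that no non-zero submodule of the A-module C_i is isomorphic to a submodule of X. Set C = Σ_{i∈I} C_i. Then X is injective with respect to the module C_A. -/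
open MulOpposite

open MulOpposite

/-!
If `X` is non-singular, the kernel of a non-zero map `M → X` is not essential, so the map is
injective on some non-zero submodule of `M`. Hence every map from a submodule of some `Cᵢ` to `X`
is zero. This property passes to sums: a map `g : N → X` with `N ≤ M₁ + M₂` kills `N ∩ M₂`, so it
extends to `N + M₂` by zero on `M₂`, and that extension also kills `M₁ ∩ (N + M₂)`, which together
with `M₂` spans `N + M₂`. So every map from a submodule of `C` to `X` is zero, and extends by zero.
-/

namespace Submodule

variable {R V X : Type*} [Ring R] [AddCommGroup V] [Module R V] [AddCommGroup X] [Module R X]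

variable (X) in
def HomsVanish (M : Submodule R V) : Prop :=
  ∀ N : Submodule R V, N ≤ M → ∀ g : N →ₗ[R] X, g = 0

theorem HomsVanish.apply_eq_zero {M N : Submodule R V} (hM : M.HomsVanish X) (g : N →ₗ[R] X)
    (x : N) (hx : (x : V) ∈ M) : g x = 0 :=
  LinearMap.congr_fun (hM (N ⊓ M) inf_le_right (g ∘ₗ inclusion inf_le_left)) ⟨x, x.2, hx⟩

theorem HomsVanish.eq_zero {M : Submodule R V} (hM : M.HomsVanish X) (N : Submodule R M)
    (g : N →ₗ[R] X) : g = 0 := by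
  let e := N.equivMapOfInjective M.subtype M.injective_subtype
  ext x
  simpa using LinearMap.congr_fun (hM _ (map_subtype_le M N) (g ∘ₗ e.symm.toLinearMap)) (e x)

theorem homsVanish_bot : (⊥ : Submodule R V).HomsVanish X := by
  intro N hN g
  ext x
  have hx : x = 0 := Subtype.ext ((mem_bot R).mp (hN x.2))
  simp [hx]

theorem HomsVanish.sup {M₁ M₂ : Submodule R V} (h₁ : M₁.HomsVanish X) (h₂ : M₂.HomsVanish X) :
    (M₁ ⊔ M₂).HomsVanish X := by
  intro N hN g
  have hker : comap N.subtype N ⊓ comap N.subtype M₂ ≤ LinearMap.ker g :=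
    fun x hx => h₂.apply_eq_zero g x hx.2
  let g₀ := (comap N.subtype N ⊓ comap N.subtype M₂).liftQ g hker
  let e := LinearMap.quotientInfEquivSupQuotient N M₂
  let g' : ↥(N ⊔ M₂) →ₗ[R] X := g₀ ∘ₗ e.symm.toLinearMap ∘ₗ (comap (N ⊔ M₂).subtype M₂).mkQ
  have hg'_ext (x : N) : g' (inclusion le_sup_left x) = g x := by
    change g₀ (e.symm (e (Quotient.mk x))) = g x
    rw [LinearEquiv.symm_apply_apply, liftQ_apply]
  have hg'_M₂ (y : ↥(N ⊔ M₂)) (hy : (y : V) ∈ M₂) : g' y = 0 := by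
    have hy' : (Quotient.mk y : _ ⧸ comap (N ⊔ M₂).subtype M₂) = 0 :=
      (Quotient.mk_eq_zero _).mpr hy
    change g₀ (e.symm (Quotient.mk y)) = 0
    rw [hy', map_zero, map_zero]
  ext x
  obtain ⟨m₁, hm₁, m₂, hm₂, hsum⟩ := mem_sup.mp (hN x.2)
  have hm₁' : m₁ ∈ N ⊔ M₂ := by
    rw [eq_sub_of_add_eq hsum]
    exact sub_mem (mem_sup_left x.2) (mem_sup_right hm₂)
  have hx : inclusion le_sup_left x = ⟨m₁, hm₁'⟩ + ⟨m₂, mem_sup_right hm₂⟩ := Subtype.ext hsum.symm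
  rw [LinearMap.zero_apply, ← hg'_ext, hx, map_add, h₁.apply_eq_zero g' _ hm₁, hg'_M₂ _ hm₂,
    add_zero]

theorem homsVanish_sSup {S : Set (Submodule R V)} (hS : ∀ M ∈ S, M.HomsVanish X) :
    (sSup S).HomsVanish X := by
  intro N hN g
  ext x
  obtain ⟨s, hsS, hx⟩ := mem_sSup_iff_exists_finset.mp (hN x.2)
  have hs : (s.sup id).HomsVanish X :=
    Finset.sup_induction homsVanish_bot (fun _ h₁ _ h₂ => h₁.sup h₂) fun M hM => hS M (hsS hM)
  rw [Finset.sup_eq_iSup] at hs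
  exact hs.apply_eq_zero g x hx

end Submodule

section Nonsingular

open Submodule

variable {A W V X : Type*} [Ring A] [AddCommGroup X] [Module Aᵐᵒᵖ X]
  [AddCommGroup W] [Module Aᵐᵒᵖ W] [AddCommGroup V] [Module Aᵐᵒᵖ V]

theorem IsNonsingularMod.exists_ne_bot_disjoint_ker (hX : IsNonsingularMod A X)
    {g : W →ₗ[Aᵐᵒᵖ] X} (hg : g ≠ 0) :
    ∃ K : Submodule Aᵐᵒᵖ W, K ≠ ⊥ ∧ Disjoint K (LinearMap.ker g) := by
  by_contra! hess
  refine hg (LinearMap.ext fun m => hX (g m) fun J hJ => ?_)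
  obtain ⟨a, haJ, ha⟩ := J.ne_bot_iff.mp hJ
  rw [Submodule.ne_bot_iff]
  by_cases ham : op a • m = 0
  · exact ⟨a, ⟨show op a • g m = 0 by rw [← map_smul, ham, map_zero], haJ⟩, ha⟩
  · have := hess (span Aᵐᵒᵖ {op a • m}) (by simpa [span_singleton_eq_bot] using ham)
    simp only [disjoint_def, mem_span_singleton, LinearMap.mem_ker] at this
    push Not at this
    obtain ⟨_, ⟨c, rfl⟩, hg0, hz0⟩ := this
    have hca : op (c • a) = c * op a := rfl
    refine ⟨c • a, ⟨?_, J.smul_mem c haJ⟩, fun h => hz0 ?_⟩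
    · show op (c • a) • g m = 0
      rw [hca, mul_smul, ← map_smul, ← map_smul, hg0]
    · rw [← mul_smul, ← hca, h, op_zero, zero_smul]

theorem IsNonsingularMod.homsVanish_of_forall_not_injective (hX : IsNonsingularMod A X)
    {M : Submodule Aᵐᵒᵖ V}
    (hM : ∀ D : Submodule Aᵐᵒᵖ V, D ≤ M → D ≠ ⊥ → ¬∃ f : D →ₗ[Aᵐᵒᵖ] X, Function.Injective f) :
    M.HomsVanish X := by
  intro N hN g
  by_contra hg
  obtain ⟨K, hK, hdisj⟩ := hX.exists_ne_bot_disjoint_ker hg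
  let e := K.equivMapOfInjective N.subtype N.injective_subtype
  refine hM (K.map N.subtype) ((map_subtype_le N K).trans hN) ?_
    ⟨g ∘ₗ K.subtype ∘ₗ e.symm.toLinearMap, ?_⟩
  · simpa using (map_injective_of_injective N.injective_subtype).ne hK
  · exact (LinearMap.disjoint_ker_iff_injOn.mp hdisj).injective.comp e.symm.injective

end Nonsingular

theorem stmt5_general (A : Type u) [Ring A] (X : Type v) [AddCommGroup X] [Module Aᵐᵒᵖ X]
    (hX : IsNonsingularMod A X)
    (C : Submodule Aᵐᵒᵖ A)
    (hC : C = sSup {Ci : Submodule Aᵐᵒᵖ A | Ci ≠ ⊥ ∧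
      ∀ D : Submodule Aᵐᵒᵖ A, D ≤ Ci → D ≠ ⊥ →
        ¬∃ f : D →ₗ[Aᵐᵒᵖ] X, Function.Injective f}) :
    IsInjectiveWrt Aᵐᵒᵖ X ↥C := by
  have hCX : C.HomsVanish X :=
    hC ▸ Submodule.homsVanish_sSup fun _ hCi => hX.homsVanish_of_forall_not_injective hCi.2
  intro Y₁ f
  exact ⟨0, fun y => by rw [hCX.eq_zero Y₁ f, LinearMap.zero_apply, LinearMap.zero_apply]⟩

/-- Let `X` be a non-singular non-zero right `A`-module and let `C` be the sum of
all non-zero right ideals of `A` having no non-zero submodule isomorphic to a submodule of `X`.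
Then `X` is injective with respect to the module `C_A`. -/
theorem stmt5 (A : Type u) [Ring A] (X : Type v) [AddCommGroup X] [Module Aᵐᵒᵖ X]
    [Nontrivial X] (hX : IsNonsingularMod A X)
    (C : Submodule Aᵐᵒᵖ A)
    (hC : C = sSup {Ci : Submodule Aᵐᵒᵖ A | Ci ≠ ⊥ ∧
      ∀ D : Submodule Aᵐᵒᵖ A, D ≤ Ci → D ≠ ⊥ →
        ¬∃ f : D →ₗ[Aᵐᵒᵖ] X, Function.Injective f}) :
    IsInjectiveWrt Aᵐᵒᵖ X ↥C :=
  stmt5_general A X hX C hC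
end
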